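/- Suppose pullbacks along M-morphisms exist in K and every object of K has an M-minimization. Then the full subcategory K_min of M-minimal objects is coreflective in K: the inclusion J : K_min → K has a right adjoint R sending each object to its M-minimization. -/

import Mathlib

open CategoryTheory CategoryTheory.Limits

universe v u

/-- An (E,M)-factorization system on a category. -/
structure FactorizationSystem (K : Type u) [Category.{v} K] : Type (max u (v+1)) where
  E : MorphismProperty K
  M : MorphismProperty K
  E_comp_iso : ∀ {X Y Z : K} (e : X ⟶ Y) (i : Y ⟶ Z), IsIso i → E e → E (e ≫ i)
  iso_comp_E : ∀ {X Y Z : K} (i : X ⟶ Y) (e : Y ⟶ Z), IsIso i → E e → E (i ≫ e)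
  M_comp_iso : ∀ {X Y Z : K} (m : X ⟶ Y) (i : Y ⟶ Z), IsIso i → M m → M (m ≫ i)
  iso_comp_M : ∀ {X Y Z : K} (i : X ⟶ Y) (m : Y ⟶ Z), IsIso i → M m → M (i ≫ m)
  factor : ∀ {X Y : K} (f : X ⟶ Y),
      ∃ (I : K) (e : X ⟶ I) (m : I ⟶ Y), E e ∧ M m ∧ e ≫ m = f
  diagonal : ∀ {A B X Y : K} (e : A ⟶ B) (f : A ⟶ X) (g : B ⟶ Y) (m : X ⟶ Y),
      E e → M m → e ≫ g = f ≫ m → ∃! d : B ⟶ X, e ≫ d = f ∧ d ≫ m = g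

/-- An object is M-minimal if every M-morphism into it is an isomorphism. -/
def MMinimal {K : Type u} [Category.{v} K] (fs : FactorizationSystem K) (C : K) : Prop :=
  ∀ {D : K} (h : D ⟶ C), fs.M h → IsIso h

/-!
Orthogonality makes M the class of maps with the right lifting property against E, so M is
stable under pullback. Hence for M-minimal X and an M-minimization m : M₀ ⟶ C, the pullback of m
along any f : X ⟶ C is an M-morphism into X, thus an isomorphism, and f factors uniquely
through m: the M-minimization is a couniversal arrow from the inclusion to C.
-/

namespace FactorizationSystem

variable {K : Type u} [Category.{v} K] (fs : FactorizationSystem K)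

lemma hom_ext_of_E_of_M {A B X Y : K} {e : A ⟶ B} {m : X ⟶ Y} (he : fs.E e) (hm : fs.M m)
    {d₁ d₂ : B ⟶ X} (h₁ : e ≫ d₁ = e ≫ d₂) (h₂ : d₁ ≫ m = d₂ ≫ m) : d₁ = d₂ :=
  (fs.diagonal e (e ≫ d₂) (d₂ ≫ m) m he hm (Category.assoc _ _ _).symm).unique ⟨h₁, h₂⟩ ⟨rfl, rfl⟩

lemma M_le_rlp_E : fs.M ≤ fs.E.rlp := by
  intro X Y m hm A B e he
  refine ⟨fun {f g} sq => ?_⟩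
  obtain ⟨d, ⟨hd₁, hd₂⟩, -⟩ := fs.diagonal e f g m he hm sq.w.symm
  exact ⟨⟨⟨d, hd₁, hd₂⟩⟩⟩

lemma rlp_E_le_M : fs.E.rlp ≤ fs.M := by
  intro X Y f hf
  obtain ⟨I, e, m, he, hm, rfl⟩ := fs.factor f
  have := hf e he
  let sq : CommSq (𝟙 X) e (e ≫ m) m := ⟨by simp⟩
  have hr : e ≫ sq.lift = 𝟙 X := sq.fac_left
  have hs : sq.lift ≫ e = 𝟙 I := fs.hom_ext_of_E_of_M he hm
    (by rw [reassoc_of% hr, Category.comp_id])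
    (by rw [Category.assoc, sq.fac_right, Category.id_comp])
  exact fs.iso_comp_M e m ⟨sq.lift, hr, hs⟩ hm

lemma M_eq_rlp_E : fs.M = fs.E.rlp :=
  le_antisymm fs.M_le_rlp_E fs.rlp_E_le_M

instance : fs.M.IsStableUnderBaseChange :=
  fs.M_eq_rlp_E ▸ inferInstance

end FactorizationSystem

lemma MMinimal.existsUnique_comp_eq {K : Type u} [Category.{v} K] {fs : FactorizationSystem K}
    {X M₀ C : K} (hX : MMinimal fs X) {m : M₀ ⟶ C} (hm : fs.M m) (f : X ⟶ C)
    [HasPullback f m] : ∃! g : X ⟶ M₀, g ≫ m = f := by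
  -- M-morphisms need not be monic; uniqueness comes from the section `pullback.lift 𝟙 g`.
  have : IsIso (pullback.fst f m) := hX _ (MorphismProperty.pullback_fst f m hm)
  refine ⟨inv (pullback.fst f m) ≫ pullback.snd f m, by simp [← pullback.condition], ?_⟩
  intro g hg
  have : pullback.lift (𝟙 X) g (by simp [hg]) = inv (pullback.fst f m) :=
    IsIso.eq_inv_of_inv_hom_id (pullback.lift_fst _ _ _)
  rw [← this, pullback.lift_snd]

/-- If pullbacks along M-morphisms exist and all M-minimizations exist, the full
subcategory of M-minimal objects is coreflective: the inclusion has a right adjoint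
sending each object to its M-minimization. -/
theorem minimal_coreflective {K : Type u} [Category.{v} K] (fs : FactorizationSystem K)
    (hpb : ∀ {X Y Z : K} (f : X ⟶ Z) (m : Y ⟶ Z), fs.M m → HasPullback f m)
    (hmin : ∀ C : K, ∃ (M₀ : K) (m : M₀ ⟶ C), fs.M m ∧ MMinimal fs M₀) :
    ∃ (R : K ⥤ ObjectProperty.FullSubcategory (fun X => MMinimal fs X))
      (adj : ObjectProperty.ι (fun X => MMinimal fs X) ⊣ R),
      ∀ C : K, fs.M (adj.counit.app C) := by
  choose M₀ m hm hM₀ using hmin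
  let R₀ (C : K) : ObjectProperty.FullSubcategory (MMinimal fs) := ⟨M₀ C, hM₀ C⟩
  have hbij (X : ObjectProperty.FullSubcategory (MMinimal fs)) (C : K) :
      Function.Bijective (fun g : X ⟶ R₀ C => g.hom ≫ m C) := by
    have (f : X.obj ⟶ C) := hpb f (m C) (hm C)
    exact ((Function.bijective_iff_existsUnique _).2
      fun f => MMinimal.existsUnique_comp_eq X.property (hm C) f).comp
        ((ObjectProperty.fullyFaithfulι _).map_bijective X (R₀ C))
  let e X C := (Equiv.ofBijective _ (hbij X C)).symm
  have he : ∀ X' X C f g, e X' C ((ObjectProperty.ι _).map f ≫ g) = f ≫ e X C g := by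
    intro X' X C f g
    rw [Equiv.symm_apply_eq]
    simp only [e, Equiv.ofBijective_apply, ObjectProperty.FullSubcategory.comp_hom, Category.assoc]
    exact congrArg (f.hom ≫ ·) (Equiv.ofBijective_apply_symm_apply _ (hbij X C) g).symm
  refine ⟨_, Adjunction.adjunctionOfEquivRight e he, fun C => ?_⟩
  simpa [e] using hm C
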